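/- arXiv:2406.18687 — 6 statements merged into one kernel-verified Lean document; each statement's English description precedes it below -/
import Mathlib

section
/- The algebra homomorphism from the group algebra ℂ[S_n] to End(V^⊗n) given by permuting tensor factors is injective if and only if dim V ≥ n. -/
open scoped TensorProduct PiTensorProduct

/-- The monoid homomorphism `Sₙ → End(V^⊗n)` given by permuting tensor factors. -/
noncomputable def tensorPermHom (n : ℕ) (V : Type*) [AddCommGroup V] [Module ℂ V] :
    Equiv.Perm (Fin n) →* Module.End ℂ (⨂[ℂ] _ : Fin n, V) where
  toFun σ := (PiTensorProduct.reindex ℂ (fun _ : Fin n => V) σ).toLinearMap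
  map_one' := by
    ext x
    simp [Equiv.Perm.one_def, PiTensorProduct.reindex_refl]
  map_mul' σ τ := by
    ext x
    simp [Equiv.Perm.mul_def, ← PiTensorProduct.reindex_trans, LinearEquiv.trans_apply,
      Module.End.mul_apply]

/-!
If `dim V < n`, the antisymmetrizer `∑ sign σ • σ` is a nonzero element of `ℂ[Sₙ]` that acts on
`v₁ ⊗ ⋯ ⊗ vₙ` as the alternatization of the tensor product, which vanishes because the `vᵢ` are
linearly dependent. If `dim V ≥ n`, pick distinct basis vectors `e₁, …, eₙ`: the permuted tensors
`e_{σ⁻¹ 1} ⊗ ⋯ ⊗ e_{σ⁻¹ n}` are distinct members of the product basis of `V^⊗n`, so already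
`x ↦ x • (e₁ ⊗ ⋯ ⊗ eₙ)` is injective on `ℂ[Sₙ]`.
-/

open Equiv PiTensorProduct

noncomputable def antisymmetrizer (k α : Type*) [Ring k] [Fintype α] [DecidableEq α] :
    MonoidAlgebra k (Perm α) :=
  ∑ σ : Perm α, MonoidAlgebra.single σ ((Perm.sign σ : ℤ) : k)

theorem coeff_antisymmetrizer_one (k α : Type*) [Ring k] [Fintype α] [DecidableEq α] :
    (antisymmetrizer k α).coeff 1 = 1 := by
  rw [antisymmetrizer, MonoidAlgebra.coeff_sum, Finsupp.finsetSum_apply,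
    Finset.sum_eq_single_of_mem 1 (Finset.mem_univ _)]
  · simp
  · intro σ _ hσ
    simp [hσ]

theorem antisymmetrizer_ne_zero (k α : Type*) [Ring k] [Nontrivial k] [Fintype α]
    [DecidableEq α] : antisymmetrizer k α ≠ 0 := fun h => by
  simpa [h] using coeff_antisymmetrizer_one k α

theorem linearIndependent_tprod_comp_perm {R ι M : Type*} [CommSemiring R] [AddCommMonoid M]
    [Module R M] {n : ℕ} (b : Module.Basis ι R M) {g : Fin n → ι} (hg : g.Injective) :
    LinearIndependent R fun σ : Perm (Fin n) => tprod R (b ∘ g ∘ σ.symm) := by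
  have hinj : (fun σ : Perm (Fin n) => g ∘ σ.symm).Injective := fun σ τ h =>
    inv_injective <| Equiv.ext fun i => hg (congrFun h i)
  simpa [Basis.piTensorProduct_apply, Function.comp_def] using
    (Basis.piTensorProduct fun _ : Fin n => b).linearIndependent.comp _ hinj

section

variable {n : ℕ} {V : Type*} [AddCommGroup V] [Module ℂ V]

theorem tensorPermHom_tprod (σ : Perm (Fin n)) (f : Fin n → V) :
    tensorPermHom n V σ (tprod ℂ f) = tprod ℂ (f ∘ σ.symm) := by
  simp [tensorPermHom, reindex_tprod, Function.comp_def]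

theorem lift_tensorPermHom_apply_tprod (x : MonoidAlgebra ℂ (Perm (Fin n))) (f : Fin n → V) :
    MonoidAlgebra.lift ℂ _ _ (tensorPermHom n V) x (tprod ℂ f)
      = Finsupp.linearCombination ℂ (fun σ : Perm (Fin n) => tprod ℂ (f ∘ σ.symm)) x.coeff := by
  simp [MonoidAlgebra.lift_apply, Finsupp.linearCombination_apply, Finsupp.sum,
    tensorPermHom_tprod]

theorem lift_tensorPermHom_antisymmetrizer_tprod (f : Fin n → V) :
    MonoidAlgebra.lift ℂ _ _ (tensorPermHom n V) (antisymmetrizer ℂ (Fin n)) (tprod ℂ f)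
      = MultilinearMap.alternatization (tprod ℂ (s := fun _ : Fin n => V)) f := by
  rw [antisymmetrizer, map_sum, LinearMap.coe_sum, Finset.sum_apply,
    MultilinearMap.alternatization_apply, ← Equiv.sum_comp (Equiv.inv (Perm (Fin n)))]
  refine Finset.sum_congr rfl fun σ _ => ?_
  simp [tensorPermHom_tprod, Units.smul_def, Int.cast_smul_eq_zsmul, Function.comp_def,
    Perm.inv_def]

variable [FiniteDimensional ℂ V]

theorem lift_tensorPermHom_antisymmetrizer_eq_zero (h : Module.finrank ℂ V < n) :
    MonoidAlgebra.lift ℂ _ _ (tensorPermHom n V) (antisymmetrizer ℂ (Fin n)) = 0 := by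
  ext f
  have hdep : ¬ LinearIndependent ℂ f := fun hf => by
    simpa using (hf.fintype_card_le_finrank.trans_lt h).ne
  simp only [LinearMap.compMultilinearMap_apply, lift_tensorPermHom_antisymmetrizer_tprod,
    AlternatingMap.map_linearDependent _ f hdep, LinearMap.zero_apply]

theorem injective_lift_tensorPermHom (h : n ≤ Module.finrank ℂ V) :
    Function.Injective (MonoidAlgebra.lift ℂ _ _ (tensorPermHom n V)) := by
  let b := Module.finBasis ℂ V
  have hind := linearIndependent_tprod_comp_perm b (Fin.castLE_injective h)
  refine (injective_iff_map_eq_zero _).2 fun x hx => ?_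
  have hcomb := congrArg (· (tprod ℂ (b ∘ Fin.castLE h))) hx
  simp only [lift_tensorPermHom_apply_tprod, LinearMap.zero_apply] at hcomb
  exact MonoidAlgebra.coeff_eq_zero.1 (linearIndependent_iff.1 hind _ hcomb)

theorem not_injective_lift_tensorPermHom (h : Module.finrank ℂ V < n) :
    ¬ Function.Injective (MonoidAlgebra.lift ℂ _ _ (tensorPermHom n V)) := fun hinj =>
  antisymmetrizer_ne_zero ℂ (Fin n) <| hinj <| by
    rw [lift_tensorPermHom_antisymmetrizer_eq_zero h, map_zero]

end

/-- The algebra homomorphism `ℂ[Sₙ] → End(V^⊗n)` induced by permuting tensor factors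
is injective if and only if `dim V ≥ n`. -/
theorem groupAlgebra_to_tensorEnd_injective_iff (n : ℕ) (V : Type*) [AddCommGroup V]
    [Module ℂ V] [FiniteDimensional ℂ V] :
    Function.Injective
      (MonoidAlgebra.lift ℂ (Module.End ℂ (⨂[ℂ] _ : Fin n, V)) (Equiv.Perm (Fin n))
        (tensorPermHom n V)) ↔ n ≤ Module.finrank ℂ V :=
  ⟨fun hinj => not_lt.1 fun h => not_injective_lift_tensorPermHom h hinj,
    injective_lift_tensorPermHom⟩
end

section
/- The operators in End(V^⊗n), dim V = 2 (or any d ≥ 2), induced by the identity permutation together with all transpositions (i,j) with 1 ≤ i < j ≤ n, are linearly independent. -/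
/-- The operator on `V^⊗n` (here realized as `(Fin n → Fin d) → ℂ`, `dim V = d`)
induced by a permutation `σ ∈ Sₙ` permuting the tensor factors. -/
def permOp (d n : ℕ) (σ : Equiv.Perm (Fin n)) :
    Module.End ℂ ((Fin n → Fin d) → ℂ) where
  toFun f := fun x => f (x ∘ σ)
  map_add' _ _ := rfl
  map_smul' _ _ := rfl

/-!
Fix letters `a ≠ b` and let `e j` be the word that is `b` at position `j` and `a` elsewhere.
Permuting the factors by `σ` turns `e j` into `e (σ⁻¹ j)`, so for `i < j` the matrix entry at
`(e j, e i)` of the transposition `(k l)`, `k < l`, is nonzero exactly when `(k l) = (i j)`, and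
that of the identity vanishes. These entries isolate the coefficient of each transposition in a
vanishing linear combination; the constant word `a`, fixed by every permutation, then isolates
the coefficient of the identity.
-/

open Function Equiv

theorem Function.update_const_comp_perm {ι α : Type*} [DecidableEq ι] (a b : α) (j : ι)
    (σ : Perm ι) : update (const ι a) j b ∘ σ = update (const ι a) (σ.symm j) b :=
  update_comp_equiv _ σ j b

theorem Function.update_const_injective {ι α : Type*} [DecidableEq ι] {a b : α} (hab : a ≠ b) :
    Injective (fun j : ι => update (const ι a) j b) := by
  intro i j h
  by_contra hij
  simpa [update_of_ne (Ne.symm hij), hab] using congr_fun h j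

theorem Equiv.swap_apply_snd_eq_fst_iff {α : Type*} [LinearOrder α]
    {p q : {p : α × α // p.1 < p.2}} : swap q.1.1 q.1.2 p.1.2 = p.1.1 ↔ q = p := by
  obtain ⟨⟨i, j⟩, hij⟩ := p
  obtain ⟨⟨k, l⟩, hkl⟩ := q
  simp only [Subtype.mk.injEq, Prod.mk.injEq]
  grind

/-- For `dim V = d ≥ 2`, the operators on `V^⊗n` induced by the identity together with
all transpositions `(i,j)`, `i < j`, are linearly independent. -/
theorem one_and_transpositions_linearIndependent (d n : ℕ) (hd : 2 ≤ d) :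
    LinearIndependent ℂ
      (fun o : Option {p : Fin n × Fin n // p.1 < p.2} =>
        match o with
        | none => (1 : Module.End ℂ ((Fin n → Fin d) → ℂ))
        | some p => permOp d n (Equiv.swap p.1.1 p.1.2)) := by
  have : Nontrivial (Fin d) := Fin.nontrivial_iff_two_le.2 hd
  obtain ⟨a, b, hab⟩ := exists_pair_ne (Fin d)
  rw [Fintype.linearIndependent_iff]
  intro g hg
  have hentry (x y : Fin n → Fin d) :
      let δ : (Fin n → Fin d) → ℂ := Pi.single y 1
      g none * δ x + ∑ p, g (some p) * δ (x ∘ swap p.1.1 p.1.2) = 0 := by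
    simpa [Fintype.sum_option, permOp] using congr($hg (Pi.single y 1) x)
  have hswap (p) : g (some p) = 0 := by
    simpa [update_const_comp_perm, Pi.single_apply, (update_const_injective hab).eq_iff, p.2.ne',
      swap_apply_snd_eq_fst_iff] using
      hentry (update (const _ a) p.1.2 b) (update (const _ a) p.1.1 b)
  have hone : g none = 0 := by
    simpa [hswap] using hentry (const _ a) (const _ a)
  rintro (_ | p)
  exacts [hone, hswap p]
end

section
/- The number of permutations in S_n with no decreasing subsequence of length 3 equals the n-th Catalan number C_n. -/
/-!
Read from right to left, a permutation avoids `321` exactly when its list of values has no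
increasing subsequence of length 3. In such a list of `0, …, n` the entries before the maximum `n`
decrease, so it arises from such a list of `0, …, n - 1` by inserting `n` after its first `k`
entries, with `k` at most the length `d` of its longest decreasing prefix; the new list has a
decreasing prefix of length `k` if `k > 0` and `d + 1` if `k = 0`. Hence the number of such lists
of `0, …, n - 1` with `m ≤ d` satisfies the recurrence of the ballot numbers
`C(2n - m, n) - C(2n - m, n + 1)`, which for `m = 0` are the Catalan numbers.
-/

open List
open scoped Finset

namespace ThreeGood

def HasIncreasingTriple (l : List ℕ) : Prop :=
  ∃ x y z, [x, y, z] <+ l ∧ x < y ∧ y < z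

open scoped Classical in
noncomputable def avoiders (n : ℕ) : Finset (List ℕ) :=
  {l ∈ (range n).permutations.toFinset | ¬ HasIncreasingTriple l}

variable {n : ℕ} {l : List ℕ}

theorem mem_avoiders : l ∈ avoiders n ↔ l ~ range n ∧ ¬ HasIncreasingTriple l := by
  simp [avoiders]

theorem lt_of_mem_avoiders (hl : l ∈ avoiders n) {x : ℕ} (hx : x ∈ l) : x < n :=
  mem_range.1 ((mem_avoiders.1 hl).1.subset hx)

section Permutations

def toListRev (σ : Equiv.Perm (Fin n)) : List ℕ :=
  ((finRange n).map fun i => (σ i : ℕ)).reverse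

theorem toListRev_perm_range (σ : Equiv.Perm (Fin n)) : toListRev σ ~ range n := by
  refine (perm_ext_iff_of_nodup ?_ nodup_range).2 fun x => ?_
  · exact nodup_reverse.2 ((nodup_finRange n).map (Fin.val_injective.comp σ.injective))
  · simp only [toListRev, mem_reverse, List.mem_map, mem_finRange, true_and, mem_range]
    exact ⟨fun ⟨i, hi⟩ => hi ▸ (σ i).isLt, fun hx => ⟨σ.symm ⟨x, hx⟩, by simp⟩⟩

theorem toListRev_injective : Function.Injective (toListRev (n := n)) := by
  intro σ τ h
  rw [toListRev, toListRev, reverse_inj, map_inj_left] at h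
  exact Equiv.ext fun i => Fin.ext (h i (mem_finRange i))

theorem triple_sublist_finRange_iff {i j k : Fin n} :
    [i, j, k] <+ finRange n ↔ i < j ∧ j < k := by
  constructor
  · intro h
    have := (pairwise_lt_finRange n).sublist h
    simp_all
  · rintro ⟨hij, hjk⟩
    refine sublist_of_subperm_of_pairwise (r := (· ≤ ·)) ?_ ?_ (pairwise_le_finRange n)
    · exact subperm_of_subset (by simp [hij.ne, hjk.ne, (hij.trans hjk).ne]) (by simp)
    · simp [hij.le, hjk.le, (hij.trans hjk).le]

theorem hasIncreasingTriple_toListRev_iff (σ : Equiv.Perm (Fin n)) :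
    HasIncreasingTriple (toListRev σ) ↔
      ∃ i j k : Fin n, i < j ∧ j < k ∧ σ j < σ i ∧ σ k < σ j := by
  simp only [HasIncreasingTriple, toListRev]
  constructor
  · rintro ⟨x, y, z, hs, hxy, hyz⟩
    rw [← reverse_sublist, reverse_reverse, sublist_map_iff] at hs
    obtain ⟨l', hl', he⟩ := hs
    obtain ⟨i, j, k, rfl⟩ : ∃ i j k, l' = [i, j, k] := by
      match l', he with
      | [i, j, k], _ => exact ⟨i, j, k, rfl⟩
    simp only [reverse_cons, reverse_nil, nil_append, cons_append, List.map_cons,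
      List.map_nil, cons.injEq, and_true] at he
    obtain ⟨rfl, rfl, rfl⟩ := he
    obtain ⟨hij, hjk⟩ := triple_sublist_finRange_iff.1 hl'
    exact ⟨i, j, k, hij, hjk, hyz, hxy⟩
  · rintro ⟨i, j, k, hij, hjk, hji, hkj⟩
    refine ⟨σ k, σ j, σ i, ?_, hkj, hji⟩
    rw [← reverse_sublist, reverse_reverse, sublist_map_iff]
    exact ⟨[i, j, k], triple_sublist_finRange_iff.2 ⟨hij, hjk⟩, rfl⟩

theorem image_toListRev :
    Finset.univ.image (toListRev (n := n)) = (range n).permutations.toFinset := by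
  refine Finset.eq_of_subset_of_card_le (fun l hl => ?_) ?_
  · obtain ⟨σ, -, rfl⟩ := Finset.mem_image.1 hl
    exact mem_toFinset.2 (mem_permutations.2 (toListRev_perm_range σ))
  · rw [Finset.card_image_of_injective _ toListRev_injective,
      toFinset_card_of_nodup (nodup_permutations _ nodup_range), length_permutations,
      length_range, Finset.card_univ, Fintype.card_perm, Fintype.card_fin]

theorem card_threeGood_eq_card_avoiders :
    Fintype.card {σ : Equiv.Perm (Fin n) //
      ¬ ∃ i j k : Fin n, i < j ∧ j < k ∧ σ j < σ i ∧ σ k < σ j} = #(avoiders n) := by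
  classical
  rw [Fintype.card_subtype, ← Finset.card_image_of_injective _ toListRev_injective, avoiders,
    ← image_toListRev, Finset.filter_image]
  simp only [hasIncreasingTriple_toListRev_iff]

end Permutations

section DecreasingPrefix

def decPrefixLen (l : List ℕ) : ℕ :=
  Nat.findGreatest (fun k => (l.take k).Pairwise (· > ·)) l.length

theorem le_decPrefixLen_iff {k : ℕ} :
    k ≤ decPrefixLen l ↔ k ≤ l.length ∧ (l.take k).Pairwise (· > ·) := by
  refine ⟨fun hk => ⟨hk.trans (Nat.findGreatest_le _), ?_⟩,
    fun ⟨hk, hp⟩ => Nat.le_findGreatest hk hp⟩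
  have hmax : (l.take (decPrefixLen l)).Pairwise (· > ·) :=
    Nat.findGreatest_spec (P := fun k => (l.take k).Pairwise (· > ·)) (Nat.zero_le _) (by simp)
  exact hmax.sublist (take_sublist_take_left hk)

theorem decPrefixLen_le_length : decPrefixLen l ≤ l.length :=
  Nat.findGreatest_le _

theorem one_le_decPrefixLen (hl : l ≠ []) : 1 ≤ decPrefixLen l := by
  obtain ⟨x, t, rfl⟩ := exists_cons_of_ne_nil hl
  exact le_decPrefixLen_iff.2 ⟨by simp, by simp [take_succ_cons]⟩

theorem length_le_decPrefixLen_append {a b : List ℕ} (hb : b.Pairwise (· > ·)) :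
    b.length ≤ decPrefixLen (b ++ a) :=
  le_decPrefixLen_iff.2 ⟨by simp, by rwa [take_left' rfl]⟩

theorem decPrefixLen_cons {a : List ℕ} (ha : ∀ x ∈ a, x < n) :
    decPrefixLen (n :: a) = decPrefixLen a + 1 := by
  refine eq_of_forall_le_iff fun k => ?_
  cases k with
  | zero => simp
  | succ k =>
    simp only [le_decPrefixLen_iff, length_cons, take_succ_cons, pairwise_cons,
      add_le_add_iff_right]
    exact ⟨fun ⟨hk, _, hp⟩ => ⟨hk, hp⟩,
      fun ⟨hk, hp⟩ => ⟨hk, fun x hx => ha x (mem_of_mem_take hx), hp⟩⟩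

theorem decPrefixLen_append_cons {a b : List ℕ} (hb : b.Pairwise (· > ·))
    (hlt : ∀ x ∈ b ++ a, x < n) :
    decPrefixLen (b ++ n :: a) = if b = [] then decPrefixLen a + 1 else b.length := by
  split_ifs with h
  · subst h
    exact decPrefixLen_cons hlt
  refine le_antisymm ?_ (length_le_decPrefixLen_append hb)
  by_contra! hgt
  obtain ⟨-, hp⟩ := le_decPrefixLen_iff.1 (Nat.succ_le_of_lt hgt)
  simp only [take_append, take_of_length_le (Nat.le_succ _), Nat.succ_sub le_rfl, Nat.sub_self,
    take_succ_cons, take_zero, pairwise_append] at hp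
  obtain ⟨x, hx⟩ := exists_mem_of_ne_nil b h
  exact (hp.2.2 x hx n (mem_singleton_self n)).asymm (hlt x (mem_append_left a hx))

end DecreasingPrefix

section Insertion

theorem sublist_of_append_singleton_sublist {α : Type*} {s b a : List α} {x : α} (hx : x ∉ a)
    (h : s ++ [x] <+ b ++ x :: a) : s <+ b := by
  obtain ⟨r₁, r₂, he, hs, hr₂⟩ := append_sublist_iff.1 h
  rcases append_eq_append_iff.1 he with ⟨c, rfl, hc⟩ | ⟨c, rfl, rfl⟩
  · cases c with
    | nil => simpa using hs
    | cons y c =>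
      obtain ⟨rfl, rfl⟩ := cons_eq_cons.1 hc
      exact absurd (mem_append_right c (singleton_sublist.1 hr₂)) hx
  · exact hs.trans (sublist_append_left r₁ c)

theorem perm_range_succ_iff {a b : List ℕ} :
    b ++ n :: a ~ range (n + 1) ↔ b ++ a ~ range n := by
  rw [range_succ, perm_middle.congr_left, (perm_append_singleton n (range n)).congr_right,
    perm_cons]

theorem erase_append_cons {a b : List ℕ} (hb : n ∉ b) : (b ++ n :: a).erase n = b ++ a := by
  simp [erase_append_right _ hb]

theorem hasIncreasingTriple_append_cons_iff {a b : List ℕ} (hlt : ∀ x ∈ b ++ a, x < n) :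
    HasIncreasingTriple (b ++ n :: a) ↔
      HasIncreasingTriple (b ++ a) ∨ ∃ x y, [x, y] <+ b ∧ x < y := by
  have hnb : n ∉ b := fun h => (hlt n (mem_append_left a h)).false
  have hna : n ∉ a := fun h => (hlt n (mem_append_right b h)).false
  constructor
  · rintro ⟨x, y, z, hs, hxy, hyz⟩
    rcases eq_or_ne z n with rfl | hz
    · exact Or.inr ⟨x, y, sublist_of_append_singleton_sublist hna hs, hxy⟩
    have hzn : z < n := hlt z (by simpa [hz] using hs.subset (by simp : z ∈ [x, y, z]))
    have hn : n ∉ [x, y, z] := by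
      simp only [mem_cons, not_mem_nil, or_false]
      omega
    refine Or.inl ⟨x, y, z, ?_, hxy, hyz⟩
    simpa [erase_of_not_mem hn, erase_append_cons hnb] using hs.erase n
  · rintro (⟨x, y, z, hs, hxy, hyz⟩ | ⟨x, y, hs, hxy⟩)
    · exact ⟨x, y, z, hs.trans ((sublist_cons_self n a).append_left b), hxy, hyz⟩
    · exact ⟨x, y, n, hs.append (singleton_sublist.2 (mem_cons_self ..)), hxy,
        hlt y (mem_append_left a (hs.subset (by simp)))⟩

theorem pairwise_gt_iff_of_nodup {b : List ℕ} (hb : b.Nodup) :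
    b.Pairwise (· > ·) ↔ ¬ ∃ x y, [x, y] <+ b ∧ x < y := by
  rw [pairwise_iff_forall_sublist]
  refine ⟨fun h ⟨x, y, hs, hxy⟩ => (h hs).asymm hxy, fun h x y hs => ?_⟩
  have hne : x ≠ y := by simpa using hb.sublist hs
  exact lt_of_le_of_ne (not_lt.1 fun hxy => h ⟨x, y, hs, hxy⟩) hne.symm

theorem mem_avoiders_append_cons_iff {a b : List ℕ} :
    b ++ n :: a ∈ avoiders (n + 1) ↔ b ++ a ∈ avoiders n ∧ b.Pairwise (· > ·) := by
  simp only [mem_avoiders, perm_range_succ_iff, and_assoc]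
  refine and_congr_right fun hp => ?_
  have hlt : ∀ x ∈ b ++ a, x < n := fun x hx => mem_range.1 (hp.subset hx)
  have hb : b.Nodup := (hp.nodup_iff.2 nodup_range).sublist (sublist_append_left b a)
  rw [hasIncreasingTriple_append_cons_iff hlt, pairwise_gt_iff_of_nodup hb, not_or]

theorem exists_eq_append_cons_of_mem_avoiders_succ (hl : l ∈ avoiders (n + 1)) :
    ∃ b a, l = b ++ n :: a ∧ b ++ a ∈ avoiders n ∧ b.Pairwise (· > ·) := by
  have hn : n ∈ l := (mem_avoiders.1 hl).1.mem_iff.2 (mem_range.2 n.lt_succ_self)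
  obtain ⟨b, a, rfl⟩ := append_of_mem hn
  exact ⟨b, a, rfl, mem_avoiders_append_cons_iff.1 hl⟩

/-- The inverse of `l ↦ l.erase n` on lists in `avoiders (n + 1)` whose decreasing prefix has
length `j + 1`. -/
def insertMax (n j : ℕ) (l : List ℕ) : List ℕ :=
  if decPrefixLen l = j then n :: l else l.take (j + 1) ++ n :: l.drop (j + 1)

theorem insertMax_mem (hl : l ∈ avoiders n) {j : ℕ} (hj : j ≤ decPrefixLen l) :
    insertMax n j l ∈ avoiders (n + 1) ∧ decPrefixLen (insertMax n j l) = j + 1 := by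
  have hlt : ∀ x ∈ l, x < n := fun x hx => lt_of_mem_avoiders hl hx
  rw [insertMax]
  split_ifs with h
  · exact ⟨(mem_avoiders_append_cons_iff (b := [])).2 ⟨hl, .nil⟩,
      by rw [decPrefixLen_cons hlt, h]⟩
  obtain ⟨hlen, hp⟩ := le_decPrefixLen_iff.1 (Nat.succ_le_of_lt (lt_of_le_of_ne hj (Ne.symm h)))
  rw [← take_append_drop (j + 1) l] at hl hlt
  refine ⟨mem_avoiders_append_cons_iff.2 ⟨hl, hp⟩, ?_⟩
  rw [decPrefixLen_append_cons hp hlt, if_neg, length_take, min_eq_left hlen]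
  rw [← ne_eq, ← length_pos_iff, length_take]
  omega

theorem erase_insertMax (hl : l ∈ avoiders n) (j : ℕ) : (insertMax n j l).erase n = l := by
  have hn : n ∉ l := fun h => (lt_of_mem_avoiders hl h).false
  rw [insertMax]
  split_ifs
  · exact erase_cons_head n l
  · rw [erase_append_cons (fun h => hn (mem_of_mem_take h)), take_append_drop]

theorem insertMax_erase (hl : l ∈ avoiders (n + 1)) {j : ℕ} (hj : decPrefixLen l = j + 1) :
    l.erase n ∈ avoiders n ∧ j ≤ decPrefixLen (l.erase n) ∧
      insertMax n j (l.erase n) = l := by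
  obtain ⟨b, a, rfl, hba, hb⟩ := exists_eq_append_cons_of_mem_avoiders_succ hl
  have hlt : ∀ x ∈ b ++ a, x < n := fun x hx => lt_of_mem_avoiders hba hx
  have hlen := length_le_decPrefixLen_append (a := a) hb
  rw [erase_append_cons (fun h => (hlt n (mem_append_left a h)).false)]
  rw [decPrefixLen_append_cons hb hlt] at hj
  by_cases hb0 : b = []
  · subst hb0
    rw [if_pos rfl] at hj
    have hj' : decPrefixLen a = j := by omega
    exact ⟨hba, hj'.ge, by rw [nil_append, insertMax, if_pos hj', nil_append]⟩
  · rw [if_neg hb0] at hj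
    have hne : decPrefixLen (b ++ a) ≠ j := by omega
    exact ⟨hba, by omega, by rw [insertMax, if_neg hne, take_left' hj, drop_left' hj]⟩

end Insertion

section Counting

noncomputable def countDecPrefixGe (n m : ℕ) : ℕ :=
  #{l ∈ avoiders n | m ≤ decPrefixLen l}

theorem card_filter_decPrefixLen_eq_succ (n j : ℕ) :
    #{l ∈ avoiders (n + 1) | decPrefixLen l = j + 1} = countDecPrefixGe n j := by
  refine Finset.card_bij' (fun l _ => l.erase n) (fun l _ => insertMax n j l) ?_ ?_ ?_ ?_
  · intro l hl
    obtain ⟨hl, hj⟩ := Finset.mem_filter.1 hl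
    exact Finset.mem_filter.2 ⟨(insertMax_erase hl hj).1, (insertMax_erase hl hj).2.1⟩
  · intro l hl
    obtain ⟨hl, hj⟩ := Finset.mem_filter.1 hl
    exact Finset.mem_filter.2 (insertMax_mem hl hj)
  · intro l hl
    obtain ⟨hl, hj⟩ := Finset.mem_filter.1 hl
    exact (insertMax_erase hl hj).2.2
  · intro l hl
    exact erase_insertMax (Finset.mem_filter.1 hl).1 j

theorem countDecPrefixGe_zero_right (n : ℕ) : countDecPrefixGe n 0 = #(avoiders n) := by
  simp [countDecPrefixGe]

theorem countDecPrefixGe_eq_zero {m : ℕ} (h : n < m) : countDecPrefixGe n m = 0 := by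
  refine Finset.card_eq_zero.2 (Finset.filter_eq_empty_iff.2 fun l hl hm => ?_)
  have hlen : l.length = n := by simpa using (mem_avoiders.1 hl).1.length_eq
  have := hm.trans decPrefixLen_le_length
  omega

theorem countDecPrefixGe_succ_zero : countDecPrefixGe (n + 1) 0 = countDecPrefixGe (n + 1) 1 := by
  refine congrArg Finset.card (Finset.filter_congr fun l hl => ?_)
  have hl : l ≠ [] := by
    rintro rfl
    simpa using (mem_avoiders.1 hl).1.length_eq
  simp [one_le_decPrefixLen hl]

theorem countDecPrefixGe_succ_succ (j : ℕ) :
    countDecPrefixGe (n + 1) (j + 1) = countDecPrefixGe (n + 1) (j + 2) + countDecPrefixGe n j := by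
  rw [← card_filter_decPrefixLen_eq_succ n j, countDecPrefixGe, countDecPrefixGe,
    ← Finset.card_union_of_disjoint (Finset.disjoint_filter.2 fun _ _ h => by omega),
    ← Finset.filter_or]
  exact congrArg Finset.card (Finset.filter_congr fun _ _ => by omega)

theorem card_avoiders_zero : #(avoiders 0) = 1 := by
  rw [Finset.card_eq_one]
  refine ⟨[], Finset.eq_singleton_iff_unique_mem.2
    ⟨mem_avoiders.2 ⟨by simp, ?_⟩, fun l hl => ?_⟩⟩
  · rintro ⟨x, y, z, hs, -⟩
    simpa using hs.length_le
  · simpa using (mem_avoiders.1 hl).1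

end Counting

section Ballot

def ballot (n m : ℕ) : ℤ :=
  (2 * n - m).choose n - (2 * n - m).choose (n + 1)

theorem ballot_succ_succ {j : ℕ} (h : j ≤ n) :
    ballot (n + 1) (j + 1) = ballot (n + 1) (j + 2) + ballot n j := by
  obtain ⟨N, hN⟩ : ∃ N, 2 * n - j = N := ⟨_, rfl⟩
  have h1 : 2 * (n + 1) - (j + 1) = N + 1 := by omega
  have h2 : 2 * (n + 1) - (j + 2) = N := by omega
  simp only [ballot, h1, h2, hN, Nat.choose_succ_succ', Nat.cast_add]
  ring

theorem ballot_succ_zero : ballot (n + 1) 0 = ballot (n + 1) 1 := by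
  have h1 : 2 * (n + 1) - 0 = (2 * n + 1) + 1 := by omega
  have h2 : 2 * (n + 1) - 1 = 2 * n + 1 := by omega
  rw [ballot, ballot, h1, h2, Nat.choose_succ_succ' _ n, Nat.choose_succ_succ' _ (n + 1),
    Nat.choose_symm_half]
  push_cast
  ring

theorem ballot_succ_self_succ : ballot (n + 1) (n + 2) = 0 := by
  have h : 2 * (n + 1) - (n + 2) = n := by omega
  simp [ballot, h, Nat.choose_eq_zero_of_lt]

theorem ballot_zero_right : ballot n 0 = catalan n := by
  have hchoose := Nat.choose_succ_right_eq (2 * n) n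
  have hcat := succ_mul_catalan_eq_centralBinom n
  rw [Nat.centralBinom_eq_two_mul_choose, show 2 * n - n = n by omega] at *
  have : ((n : ℤ) + 1) * ballot n 0 = ((n : ℤ) + 1) * catalan n := by
    simp only [ballot, Nat.sub_zero]
    have h1 := congrArg (Nat.cast (R := ℤ)) hchoose
    have h2 := congrArg (Nat.cast (R := ℤ)) hcat
    push_cast at h1 h2
    linear_combination -h1 - h2
  exact mul_left_cancel₀ (by positivity) this

end Ballot

theorem countDecPrefixGe_eq_ballot {m : ℕ} (hm : m ≤ n) :
    (countDecPrefixGe n m : ℤ) = ballot n m := by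
  induction n generalizing m with
  | zero =>
    obtain rfl := Nat.le_zero.1 hm
    simp [countDecPrefixGe_zero_right, card_avoiders_zero, ballot]
  | succ n ih =>
    have hsucc : ∀ j ≤ n + 1,
        (countDecPrefixGe (n + 1) (j + 1) : ℤ) = ballot (n + 1) (j + 1) := by
      intro j hj
      induction hj using Nat.decreasingInduction with
      | self => rw [countDecPrefixGe_eq_zero (by omega), ballot_succ_self_succ, Nat.cast_zero]
      | of_succ j hj ihj =>
        rw [countDecPrefixGe_succ_succ, ballot_succ_succ (by omega), Nat.cast_add, ihj,
          ih (by omega)]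
    cases m with
    | zero => rw [countDecPrefixGe_succ_zero, ballot_succ_zero, hsucc 0 (by omega)]
    | succ m => exact hsucc m (by omega)

end ThreeGood

/-- The number of permutations of `Sₙ` with no decreasing subsequence of length 3
(the 3-good permutations) is the `n`-th Catalan number. -/
theorem card_threeGood_eq_catalan (n : ℕ) :
    Fintype.card
      {σ : Equiv.Perm (Fin n) //
        ¬ ∃ i j k : Fin n, i < j ∧ j < k ∧ σ j < σ i ∧ σ k < σ j} = catalan n := by
  rw [ThreeGood.card_threeGood_eq_card_avoiders, ← ThreeGood.countDecPrefixGe_zero_right]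
  exact_mod_cast (ThreeGood.countDecPrefixGe_eq_ballot n.zero_le).trans ThreeGood.ballot_zero_right
end

section
/- In End(V^⊗4) with dim V = 2, the 4-cycle operator satisfies 2·(1,2,3,4) = (1,4)(2,3) + (1,2)(3,4) - (1,3)(2,4) - (1,4,2) + (1,3,4) + (2,3,4) + (1,2,3) + (2,4) - (3,4) - (2,3). -/
/-- In `End(V^⊗4)`, `dim V = 2` (indices written 1-based as in cycle notation, so the
letters are `0,1,2,3`): `2·(1,2,3,4) = (1,4)(2,3) + (1,2)(3,4) - (1,3)(2,4) - (1,4,2)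
+ (1,3,4) + (2,3,4) + (1,2,3) + (2,4) - (3,4) - (2,3)`. -/
theorem four_cycle_relation :
    (2 : ℂ) • permOp 2 4 (List.formPerm [(0 : Fin 4), 1, 2, 3]) =
      permOp 2 4 (Equiv.swap 0 3 * Equiv.swap 1 2) +
        permOp 2 4 (Equiv.swap 0 1 * Equiv.swap 2 3) -
        permOp 2 4 (Equiv.swap 0 2 * Equiv.swap 1 3) -
        permOp 2 4 (List.formPerm [(0 : Fin 4), 3, 1]) +
        permOp 2 4 (List.formPerm [(0 : Fin 4), 2, 3]) +
        permOp 2 4 (List.formPerm [(1 : Fin 4), 2, 3]) +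
        permOp 2 4 (List.formPerm [(0 : Fin 4), 1, 2]) +
        permOp 2 4 (Equiv.swap 1 3) - permOp 2 4 (Equiv.swap 2 3) -
        permOp 2 4 (Equiv.swap 1 2) := by
  apply LinearMap.ext; intro f
  funext x
  have h1 : x ∘ ⇑(List.formPerm [(0 : Fin 4), 1, 2, 3]) = ![x 1, x 2, x 3, x 0] := by
    funext i; fin_cases i <;> rfl
  have h2 : x ∘ ⇑((Equiv.swap 0 3 * Equiv.swap 1 2 : Equiv.Perm (Fin 4))) = ![x 3, x 2, x 1, x 0] := by
    funext i; fin_cases i <;> rfl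
  have h3 : x ∘ ⇑((Equiv.swap 0 1 * Equiv.swap 2 3 : Equiv.Perm (Fin 4))) = ![x 1, x 0, x 3, x 2] := by
    funext i; fin_cases i <;> rfl
  have h4 : x ∘ ⇑((Equiv.swap 0 2 * Equiv.swap 1 3 : Equiv.Perm (Fin 4))) = ![x 2, x 3, x 0, x 1] := by
    funext i; fin_cases i <;> rfl
  have h5 : x ∘ ⇑(List.formPerm [(0 : Fin 4), 3, 1]) = ![x 3, x 0, x 2, x 1] := by
    funext i; fin_cases i <;> rfl
  have h6 : x ∘ ⇑(List.formPerm [(0 : Fin 4), 2, 3]) = ![x 2, x 1, x 3, x 0] := by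
    funext i; fin_cases i <;> rfl
  have h7 : x ∘ ⇑(List.formPerm [(1 : Fin 4), 2, 3]) = ![x 0, x 2, x 3, x 1] := by
    funext i; fin_cases i <;> rfl
  have h8 : x ∘ ⇑(List.formPerm [(0 : Fin 4), 1, 2]) = ![x 1, x 2, x 0, x 3] := by
    funext i; fin_cases i <;> rfl
  have h9 : x ∘ ⇑(Equiv.swap (1 : Fin 4) 3) = ![x 0, x 3, x 2, x 1] := by
    funext i; fin_cases i <;> rfl
  have h10 : x ∘ ⇑(Equiv.swap (2 : Fin 4) 3) = ![x 0, x 1, x 3, x 2] := by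
    funext i; fin_cases i <;> rfl
  have h11 : x ∘ ⇑(Equiv.swap (1 : Fin 4) 2) = ![x 0, x 2, x 1, x 3] := by
    funext i; fin_cases i <;> rfl
  simp only [permOp, LinearMap.smul_apply, LinearMap.add_apply, LinearMap.sub_apply,
    LinearMap.coe_mk, AddHom.coe_mk, Pi.smul_apply, Pi.add_apply, Pi.sub_apply,
    h1, h2, h3, h4, h5, h6, h7, h8, h9, h10, h11, smul_eq_mul]
  obtain ⟨a, ha⟩ : ∃ a, x 0 = a := ⟨_, rfl⟩
  obtain ⟨b, hb⟩ : ∃ b, x 1 = b := ⟨_, rfl⟩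
  obtain ⟨c, hc⟩ : ∃ c, x 2 = c := ⟨_, rfl⟩
  obtain ⟨d, hd⟩ : ∃ d, x 3 = d := ⟨_, rfl⟩
  rw [ha, hb, hc, hd]
  fin_cases a <;> fin_cases b <;> fin_cases c <;> fin_cases d <;> ring
end

section
/- For every n, the swap algebra Σ_n (dim V = 2) is spanned by the operators induced by permutations all of whose cycles have length at most 3. -/
/-!
Since `dim V = 2`, every basis tensor `x` has equal coordinates at two of any three positions
`a, b, c`; the transposition exchanging them pairs each even permutation of `{a, b, c}` with an
odd one acting identically on `x`. Hence `1 + (a b c) + (a c b) = (a b) + (a c) + (b c)` as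
operators, where `(a b c) = swap a b * swap b c`. Multiplied on the right by `ρ`, this makes
`ρ + (a b c) ρ` a combination of four permutations which, for suitable positions of `a, b, c`
on a long cycle of `ρ`, each have fewer points on cycles of length at least 4. If `σ` maps
`a ↦ b ↦ c ↦ d`, three such relations link `σ`, `(a b c) σ`, `(a c d)(a b c) σ` and, since
`(a d b)(a c d)(a b c) = 1`, `σ` again; going around this odd cycle expresses `2 σ` through
permutations with fewer points on long cycles, and induction on that number concludes.
-/

open Equiv Finset

namespace Equiv.Perm

variable {α : Type*}

def EqOffCycle (σ τ : Perm α) (a : α) : Prop :=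
  ∀ x, ¬σ.SameCycle a x → τ x = σ x

theorem pow_apply_eq_of_eqOn_sameCycle {σ τ : Perm α} {x : α}
    (h : ∀ y, σ.SameCycle x y → τ y = σ y) (k : ℕ) : (τ ^ k) x = (σ ^ k) x := by
  induction k with
  | zero => rfl
  | succ k ih => rw [pow_succ', mul_apply, ih, h _ ⟨k, by simp⟩, ← mul_apply, ← pow_succ']

theorem EqOffCycle.swap_mul [DecidableEq α] {σ τ : Perm α} {a x y : α} (hτ : EqOffCycle σ τ a)
    (hx : σ.SameCycle a x) (hy : σ.SameCycle a y) : EqOffCycle σ (swap x y * τ) a := by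
  intro v hv
  have hσv : ¬σ.SameCycle a (σ v) := fun h => hv (sameCycle_apply_right.mp h)
  rw [mul_apply, hτ v hv,
    swap_apply_of_ne_of_ne (by rintro rfl; exact hσv hx) (by rintro rfl; exact hσv hy)]

variable [Fintype α] [DecidableEq α]

def longCycleSupport (σ : Perm α) : Finset α :=
  {x | 3 < #(σ.cycleOf x).support}

theorem card_support_cycleOf_le {σ : Perm α} {x : α} {k : ℕ} (hk : 0 < k)
    (h : (σ ^ k) x = x) : #(σ.cycleOf x).support ≤ k := by
  by_cases hx : σ x = x
  · simp [(cycleOf_eq_one_iff σ).mpr hx]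
  · have hcyc := isCycle_cycleOf σ hx
    rw [← hcyc.orderOf]
    refine orderOf_le_of_pow_eq_one hk ((hcyc.pow_eq_one_iff' (x := x) ?_).mpr ?_)
    · rwa [cycleOf_apply_self]
    · rwa [cycleOf_pow_apply_self]

theorem le_three_of_mem_cycleType {σ : Perm α} (h : σ.longCycleSupport = ∅) {i : ℕ}
    (hi : i ∈ σ.cycleType) : i ≤ 3 := by
  rw [cycleType_def, Multiset.mem_map] at hi
  obtain ⟨c, hc, rfl⟩ := hi
  obtain ⟨x, hx⟩ := (mem_cycleFactorsFinset_iff.mp hc).1.nonempty_support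
  rw [cycle_is_cycleOf hx hc]
  simpa [longCycleSupport] using Finset.ext_iff.mp h x

theorem cycleOf_eq_of_eqOn_sameCycle {σ τ : Perm α} {x : α}
    (h : ∀ y, σ.SameCycle x y → τ y = σ y) : τ.cycleOf x = σ.cycleOf x := by
  have hsame : ∀ y, τ.SameCycle x y ↔ σ.SameCycle x y := fun y => by
    constructor <;> intro hy <;> obtain ⟨k, rfl⟩ := hy.exists_nat_pow_eq
    · rw [pow_apply_eq_of_eqOn_sameCycle h]; exact ⟨k, by simp⟩
    · rw [← pow_apply_eq_of_eqOn_sameCycle h]; exact ⟨k, by simp⟩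
  ext y
  by_cases hy : σ.SameCycle x y
  · rw [((hsame y).mpr hy).cycleOf_apply, hy.cycleOf_apply, h y hy]
  · rw [cycleOf_apply_of_not_sameCycle (mt (hsame y).mp hy), cycleOf_apply_of_not_sameCycle hy]

theorem card_longCycleSupport_lt {σ τ : Perm α} {a p : α} (ha : a ∈ σ.longCycleSupport)
    (hτ : EqOffCycle σ τ a) (hp : σ.SameCycle a p) (hp' : p ∉ τ.longCycleSupport) :
    #τ.longCycleSupport < #σ.longCycleSupport := by
  have hlong : ∀ x, σ.SameCycle a x → x ∈ σ.longCycleSupport := fun x hx => by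
    simpa [longCycleSupport, hx.cycleOf_eq] using ha
  calc #τ.longCycleSupport ≤ #(σ.longCycleSupport.erase p) := card_le_card fun x hx => ?_
    _ < #σ.longCycleSupport := card_erase_lt_of_mem (hlong p hp)
  refine mem_erase.mpr ⟨fun hxp => hp' (hxp ▸ hx), ?_⟩
  by_cases hax : σ.SameCycle a x
  · exact hlong x hax
  · have hoff : ∀ y, σ.SameCycle x y → τ y = σ y := fun y hxy =>
      hτ y fun hay => hax (hay.trans hxy.symm)
    simpa [longCycleSupport, cycleOf_eq_of_eqOn_sameCycle hoff] using hx

end Equiv.Perm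

open Equiv.Perm

theorem Equiv.swap_mul_swap_rotate {α : Type*} [DecidableEq α] {a b c : α} (hab : a ≠ b)
    (hac : a ≠ c) (hbc : b ≠ c) : swap a b * swap b c = swap b c * swap c a := by
  ext v
  simp only [mul_apply, swap_apply_def]
  grind

theorem Equiv.comp_swap_mul_of_eq {α β : Type*} [DecidableEq α] {x : α → β} {a b : α}
    (h : x a = x b) (π : Perm α) : x ∘ ⇑(swap a b * π) = x ∘ ⇑π := by
  rw [coe_mul, ← Function.comp_assoc, comp_swap_eq_update, h, Function.update_eq_self,
    ← h, Function.update_eq_self]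

theorem sum_comp_even_eq_sum_comp_odd_of_eq {ι κ β : Type*} [DecidableEq ι] [AddCommMonoid β]
    {F : (ι → κ) → β} {x : ι → κ} {a b c : ι} (hab : a ≠ b) (hac : a ≠ c) (hbc : b ≠ c)
    (h : x a = x b) :
    F x + F (x ∘ ⇑(swap a b * swap b c)) + F (x ∘ ⇑(swap a c * swap c b)) =
      F (x ∘ ⇑(swap a b)) + F (x ∘ ⇑(swap a c)) + F (x ∘ ⇑(swap b c)) := by
  have hacb : swap a c * swap c b = swap a b * swap a c := by
    rw [swap_mul_swap_rotate hac hab hbc.symm, swap_mul_swap_rotate hbc.symm hac.symm hab.symm,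
      swap_comm b a]
  rw [hacb, comp_swap_mul_of_eq h, comp_swap_mul_of_eq h, ← mul_one (swap a b),
    comp_swap_mul_of_eq h]
  simp only [coe_one, Function.comp_id]
  abel

theorem permOp_mul (d n : ℕ) (σ τ : Perm (Fin n)) :
    permOp d n (σ * τ) = permOp d n σ * permOp d n τ := rfl

section

variable {n : ℕ}

theorem permOp_two_even_eq_odd {a b c : Fin n} (hab : a ≠ b) (hac : a ≠ c) (hbc : b ≠ c)
    (ρ : Perm (Fin n)) :
    permOp 2 n ρ + permOp 2 n (swap a b * swap b c * ρ) + permOp 2 n (swap a c * swap c b * ρ) =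
      permOp 2 n (swap a b * ρ) + permOp 2 n (swap a c * ρ) + permOp 2 n (swap b c * ρ) := by
  suffices key : 1 + permOp 2 n (swap a b * swap b c) + permOp 2 n (swap a c * swap c b) =
      permOp 2 n (swap a b) + permOp 2 n (swap a c) + permOp 2 n (swap b c) by
    simpa only [permOp_mul, add_mul, one_mul] using congrArg (· * permOp 2 n ρ) key
  refine LinearMap.ext fun f => funext fun x => ?_
  change f x + f (x ∘ ⇑(swap a b * swap b c)) + f (x ∘ ⇑(swap a c * swap c b)) =
      f (x ∘ ⇑(swap a b)) + f (x ∘ ⇑(swap a c)) + f (x ∘ ⇑(swap b c))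
  have pigeonhole : ∀ u v w : Fin 2, u = v ∨ u = w ∨ v = w := by decide
  rcases pigeonhole (x a) (x b) (x c) with h | h | h
  · exact sum_comp_even_eq_sum_comp_odd_of_eq hab hac hbc h
  · have := sum_comp_even_eq_sum_comp_odd_of_eq (F := f) hac hab hbc.symm h
    rw [swap_comm c b] at this ⊢
    linear_combination this
  · have := sum_comp_even_eq_sum_comp_odd_of_eq (F := f) hbc hab.symm hac.symm h
    rw [swap_mul_swap_rotate hab hac hbc, ← swap_mul_swap_rotate hab.symm hbc hac]
    rw [swap_comm b a, swap_comm c a] at this ⊢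
    linear_combination this

theorem permOp_add_threeCycle_mem_of_mem {M : Submodule ℂ (Module.End ℂ ((Fin n → Fin 2) → ℂ))}
    {x y z : Fin n} (hxy : x ≠ y) (hxz : x ≠ z) (hyz : y ≠ z) {ρ : Perm (Fin n)}
    (h₁ : permOp 2 n (swap x y * ρ) ∈ M) (h₂ : permOp 2 n (swap x z * ρ) ∈ M)
    (h₃ : permOp 2 n (swap y z * ρ) ∈ M) (h₄ : permOp 2 n (swap x z * swap z y * ρ) ∈ M) :
    permOp 2 n ρ + permOp 2 n (swap x y * swap y z * ρ) ∈ M := by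
  rw [← add_sub_cancel_right (_ + _) (permOp 2 n (swap x z * swap z y * ρ)),
    permOp_two_even_eq_odd hxy hxz hyz]
  exact M.sub_mem (M.add_mem (M.add_mem h₁ h₂) h₃) h₄

def shorterSpan (σ : Perm (Fin n)) : Submodule ℂ (Module.End ℂ ((Fin n → Fin 2) → ℂ)) :=
  Submodule.span ℂ (permOp 2 n '' {τ | #τ.longCycleSupport < #σ.longCycleSupport})

section ShorterSpan

variable {σ ρ : Perm (Fin n)} {a : Fin n}

theorem permOp_mem_shorterSpan_of_pow_apply_eq (ha : a ∈ σ.longCycleSupport)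
    (hρ : EqOffCycle σ ρ a) {p : Fin n} (hp : σ.SameCycle a p) {k : ℕ} (hk : 0 < k)
    (hk3 : k ≤ 3) (hfix : (ρ ^ k) p = p) : permOp 2 n ρ ∈ shorterSpan σ := by
  refine Submodule.subset_span ⟨ρ, card_longCycleSupport_lt ha hρ hp ?_, rfl⟩
  simpa [longCycleSupport] using (card_support_cycleOf_le hk hfix).trans hk3

theorem permOp_add_threeCycle_mem_shorterSpan_of_consecutive (ha : a ∈ σ.longCycleSupport)
    (hρ : EqOffCycle σ ρ a) {x y z : Fin n} (hx : σ.SameCycle a x) (hy : σ.SameCycle a y)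
    (hz : σ.SameCycle a z) (hxy : x ≠ y) (hxz : x ≠ z) (hyz : y ≠ z) (hρx : ρ x = y)
    (hρy : ρ y = z) : permOp 2 n ρ + permOp 2 n (swap x y * swap y z * ρ) ∈ shorterSpan σ := by
  refine permOp_add_threeCycle_mem_of_mem hxy hxz hyz ?_ ?_ ?_ ?_
  · exact permOp_mem_shorterSpan_of_pow_apply_eq ha (hρ.swap_mul hx hy) hx one_pos
      (by norm_num) (by simp [hρx])
  · exact permOp_mem_shorterSpan_of_pow_apply_eq ha (hρ.swap_mul hx hz) hx two_pos
      (by norm_num) (by simp [pow_two, hρx, hρy, swap_apply_of_ne_of_ne hxy.symm hyz])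
  · exact permOp_mem_shorterSpan_of_pow_apply_eq ha (hρ.swap_mul hy hz) hy one_pos
      (by norm_num) (by simp [hρy])
  · rw [mul_assoc]
    exact permOp_mem_shorterSpan_of_pow_apply_eq ha ((hρ.swap_mul hz hy).swap_mul hx hz) hx
      one_pos (by norm_num) (by simp [hρx])

theorem permOp_add_threeCycle_mem_shorterSpan_of_skip (ha : a ∈ σ.longCycleSupport)
    (hρ : EqOffCycle σ ρ a) {x y z w : Fin n} (hx : σ.SameCycle a x) (hy : σ.SameCycle a y)
    (hz : σ.SameCycle a z) (hxy : x ≠ y) (hxz : x ≠ z) (hyz : y ≠ z) (hwx : w ≠ x)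
    (hwy : w ≠ y) (hwz : w ≠ z) (hρz : ρ z = w) (hρw : ρ w = x) (hρx : ρ x = y) :
    permOp 2 n ρ + permOp 2 n (swap x y * swap y z * ρ) ∈ shorterSpan σ := by
  refine permOp_add_threeCycle_mem_of_mem hxy hxz hyz ?_ ?_ ?_ ?_
  · exact permOp_mem_shorterSpan_of_pow_apply_eq ha (hρ.swap_mul hx hy) hx one_pos
      (by norm_num) (by simp [hρx])
  · exact permOp_mem_shorterSpan_of_pow_apply_eq ha (hρ.swap_mul hx hz) hz two_pos
      (by norm_num) (by simp [pow_two, hρz, hρw, swap_apply_of_ne_of_ne hwx hwz])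
  · exact permOp_mem_shorterSpan_of_pow_apply_eq ha (hρ.swap_mul hy hz) hx three_pos le_rfl
      (by simp [pow_three, hρx, hρz, hρw, swap_apply_of_ne_of_ne hwy hwz,
        swap_apply_of_ne_of_ne hxy hxz])
  · rw [mul_assoc]
    exact permOp_mem_shorterSpan_of_pow_apply_eq ha ((hρ.swap_mul hz hy).swap_mul hx hz) hx
      one_pos (by norm_num) (by simp [hρx])

theorem permOp_mem_shorterSpan_of_mem_longCycleSupport (ha : a ∈ σ.longCycleSupport) :
    permOp 2 n σ ∈ shorterSpan σ := by
  have hpow : ∀ k, 0 < k → k ≤ 3 → (σ ^ k) a ≠ a := fun k hk hk3 h => by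
    have := card_support_cycleOf_le hk h
    simp only [longCycleSupport, mem_filter, mem_univ, true_and] at ha
    omega
  obtain ⟨b, hσa⟩ : ∃ b, σ a = b := ⟨_, rfl⟩
  obtain ⟨c, hσb⟩ : ∃ c, σ b = c := ⟨_, rfl⟩
  obtain ⟨d, hσc⟩ : ∃ d, σ c = d := ⟨_, rfl⟩
  have hab : a ≠ b := fun h => hpow 1 one_pos (by norm_num) (by rw [pow_one, hσa, h])
  have hac : a ≠ c := fun h => hpow 2 two_pos (by norm_num)
    (by rw [pow_two, mul_apply, hσa, hσb, h])
  have had : a ≠ d := fun h => hpow 3 three_pos le_rfl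
    (by rw [pow_three, mul_apply, mul_apply, hσa, hσb, hσc, h])
  have hbc : b ≠ c := fun h => hab (σ.injective (by rw [hσa, hσb, h]))
  have hbd : b ≠ d := fun h => hac (σ.injective (by rw [hσa, hσc, h]))
  have hcd : c ≠ d := fun h => hbc (σ.injective (by rw [hσb, hσc, h]))
  have sa : σ.SameCycle a a := SameCycle.refl σ a
  have sb : σ.SameCycle a b := hσa ▸ sa.apply_right
  have sc : σ.SameCycle a c := hσb ▸ sb.apply_right
  have sd : σ.SameCycle a d := hσc ▸ sc.apply_right
  obtain ⟨σ₁, hσ₁⟩ : ∃ σ₁, swap a b * swap b c * σ = σ₁ := ⟨_, rfl⟩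
  obtain ⟨σ₂, hσ₂⟩ : ∃ σ₂, swap a c * swap c d * σ₁ = σ₂ := ⟨_, rfl⟩
  have hoff₁ : EqOffCycle σ σ₁ a := by
    rw [← hσ₁, mul_assoc]
    exact (EqOffCycle.swap_mul (fun _ _ => rfl) sb sc).swap_mul sa sb
  have hoff₂ : EqOffCycle σ σ₂ a := by
    rw [← hσ₂, mul_assoc]
    exact (hoff₁.swap_mul sc sd).swap_mul sa sc
  have h₁ := permOp_add_threeCycle_mem_shorterSpan_of_consecutive ha (fun _ _ => rfl) sa sb sc
    hab hac hbc hσa hσb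
  have h₂ := permOp_add_threeCycle_mem_shorterSpan_of_consecutive ha hoff₁ sa sc sd hac had hcd
    (by simp only [← hσ₁, mul_apply, swap_apply_def]; grind)
    (by simp only [← hσ₁, mul_apply, swap_apply_def]; grind)
  have h₃ := permOp_add_threeCycle_mem_shorterSpan_of_skip ha hoff₂ sa sd sb had hab hbd.symm
    hac.symm hcd hbc.symm
    (by simp only [← hσ₂, ← hσ₁, mul_apply, swap_apply_def]; grind)
    (by simp only [← hσ₂, ← hσ₁, mul_apply, swap_apply_def]; grind)
    (by simp only [← hσ₂, ← hσ₁, mul_apply, swap_apply_def]; grind)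
  have hclose : swap a d * swap d b * σ₂ = σ := by
    ext v
    simp only [← hσ₂, ← hσ₁, mul_apply, swap_apply_def]
    grind
  rw [hσ₁] at h₁
  rw [hσ₂] at h₂
  rw [hclose] at h₃
  rw [← Submodule.smul_mem_iff _ (two_ne_zero : (2 : ℂ) ≠ 0)]
  convert (shorterSpan σ).add_mem (Submodule.sub_mem _ h₁ h₂) h₃ using 1
  rw [two_smul]; abel

end ShorterSpan

theorem permOp_two_mem_span_shortCycles (σ : Perm (Fin n)) :
    permOp 2 n σ ∈ Submodule.span ℂ
      {f | ∃ τ : Perm (Fin n), (∀ i ∈ τ.cycleType, i ≤ 3) ∧ f = permOp 2 n τ} := by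
  obtain hempty | ⟨a, ha⟩ := σ.longCycleSupport.eq_empty_or_nonempty
  · exact Submodule.subset_span ⟨σ, fun _ => le_three_of_mem_cycleType hempty, rfl⟩
  · refine Submodule.span_le.mpr ?_ (permOp_mem_shorterSpan_of_mem_longCycleSupport ha)
    rintro _ ⟨τ, hτ, rfl⟩
    exact permOp_two_mem_span_shortCycles τ
termination_by #σ.longCycleSupport
decreasing_by exact hτ

end

/-- For every `n`, the swap algebra `Σₙ` (`dim V = 2`), i.e. the span of all permutation
operators on `V^⊗n`, is spanned by the operators of permutations all of whose cycles
have length at most 3. -/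
theorem swapAlgebra_spanned_by_short_cycles (n : ℕ) :
    Submodule.span ℂ (Set.range (permOp 2 n)) =
      Submodule.span ℂ
        {f : Module.End ℂ ((Fin n → Fin 2) → ℂ) |
          ∃ τ : Equiv.Perm (Fin n), (∀ i ∈ τ.cycleType, i ≤ 3) ∧ f = permOp 2 n τ} := by
  refine le_antisymm (Submodule.span_le.mpr ?_) (Submodule.span_mono ?_)
  · rintro _ ⟨σ, rfl⟩
    exact permOp_two_mem_span_shortCycles σ
  · rintro _ ⟨τ, -, rfl⟩
    exact ⟨τ, rfl⟩
end

section
/- The symmetric part Σ_n⁺ of the swap algebra (dim V = 2), i.e., the span of the operators g + g⁻¹ for g ∈ S_n, is spanned over ℂ by the operators induced by involutions of S_n. -/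
/-!
Put `X g = ρ g + ρ g⁻¹` and measure `g` by `#(g ^ 2).support`, the number of points on cycles of
length at least three. Since `dim V = 2`, the antisymmetrizer of any three tensor factors
vanishes; multiplied by `g` and symmetrized, this is a six-term relation among the `X (σ * g)`,
`σ ∈ S₃`. Work modulo the span of the `X h` of smaller measure, which is stable under
conjugation.

* At three consecutive points `a, g a, g² a` of a cycle the relation reads `X g + s • X g ≡ 0`,
  where `s = (a, g a)` acts by conjugation; so a product of `m` such adjacent transpositions
  acts on `X g` by `(-1) ^ m`.
* A `4`-cycle of `g` is a product of three adjacent transpositions and commutes with `g`, so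
  `X g ≡ -X g`.
* On a longer cycle, the relation at `a, g² a, g⁴ a` relates `X g` to its conjugate by the
  exchange of two adjacent blocks of length two, a product of four adjacent transpositions, up to
  a term with a `4`-cycle: again `X g ≡ -X g`.
* If the only long cycle is a `3`-cycle, an adjacent transposition conjugates `g` to `g⁻¹`, and
  `X g⁻¹ = X g`.
* Two `3`-cycles are merged by the relation at `a, g a, b` into terms with `6`-cycles.

As `2` is invertible, `X g ≡ 0`, and the induction on the measure ends at involutions.
-/

open Equiv Finset

theorem Representation.sub_neg_one_pow_smul_mem_of_forall_add_mem {k G M : Type*} [CommRing k]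
    [Monoid G] [AddCommGroup M] [Module k M] (ρ : Representation k G M) {L : Submodule k M}
    (hL : ∀ g, ∀ y ∈ L, ρ g y ∈ L) {x : M} :
    ∀ l : List G, (∀ s ∈ l, x + ρ s x ∈ L) → ρ l.prod x - (-1 : k) ^ l.length • x ∈ L
  | [], _ => by simp
  | s :: l, hl => by
    have ih := Representation.sub_neg_one_pow_smul_mem_of_forall_add_mem ρ hL l
      fun t ht => hl t (List.mem_cons_of_mem s ht)
    have key : ρ (s :: l).prod x - (-1 : k) ^ (s :: l).length • x =
        ρ s (ρ l.prod x - (-1 : k) ^ l.length • x) + (-1 : k) ^ l.length • (x + ρ s x) := by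
      simp only [List.prod_cons, List.length_cons, map_mul, Module.End.mul_apply, map_sub,
        map_smul, pow_succ, smul_add, mul_neg_one, neg_smul]
      abel
    rw [key]
    exact L.add_mem (hL s _ ih) (L.smul_mem _ (hl s List.mem_cons_self))

lemma Submodule.mem_of_add_self_mem {R M : Type*} [Semiring R] [Invertible (2 : R)]
    [AddCommMonoid M] [Module R M] {L : Submodule R M} {x : M} (h : x + x ∈ L) : x ∈ L := by
  rw [← one_smul R x, ← invOf_mul_self (2 : R), mul_smul, two_smul]
  exact L.smul_mem _ h

namespace Equiv.Perm

variable {α : Type*} [DecidableEq α]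

lemma swap_mul_swap_mul_swap_mul_swap {x₀ x₁ x₂ x₃ : α} (h01 : x₀ ≠ x₁) (h02 : x₀ ≠ x₂)
    (h03 : x₀ ≠ x₃) (h12 : x₁ ≠ x₂) (h13 : x₁ ≠ x₃) (h23 : x₂ ≠ x₃) :
    swap x₁ x₂ * (swap x₀ x₁ * (swap x₂ x₃ * swap x₁ x₂)) = swap x₀ x₂ * swap x₁ x₃ := by
  ext v
  simp only [Perm.mul_apply, swap_apply_def]
  split_ifs <;> simp_all

lemma swap_mul_swap_conj_eq {g : Perm α} {x₀ x₁ x₂ x₃ x₄ : α} (h₁ : g x₀ = x₁)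
    (h₂ : g x₁ = x₂) (h₃ : g x₂ = x₃) (h₄ : g x₃ = x₄) (h12 : x₁ ≠ x₂) (h23 : x₂ ≠ x₃)
    (h14 : x₁ ≠ x₄) (h34 : x₃ ≠ x₄) :
    swap x₀ x₂ * swap x₁ x₃ * g * (swap x₀ x₂ * swap x₁ x₃)⁻¹ = swap x₀ x₂ * swap x₂ x₄ * g := by
  have e := swap_apply_apply (swap x₁ x₃) x₂ x₄
  rw [swap_apply_of_ne_of_ne h12.symm h23, swap_apply_of_ne_of_ne h14.symm h34.symm,
    swap_inv] at e
  rw [mul_inv_rev, swap_inv, swap_inv, e]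
  simp only [mul_assoc]
  rw [← mul_assoc g, mul_swap_eq_swap_mul g x₁ x₃, mul_assoc, mul_swap_eq_swap_mul g x₀ x₂, h₁,
    h₂, h₃, h₄]

variable [Fintype α]

lemma mem_support_sq {g : Perm α} {v : α} : v ∈ (g ^ 2).support ↔ g (g v) ≠ v := by
  rw [mem_support, sq, mul_apply]

lemma support_swap_subset {x y : α} {s : Finset α} (hx : x ∈ s) (hy : y ∈ s) :
    (swap x y).support ⊆ s := by
  intro v hv
  rw [mem_support, swap_apply_def] at hv
  split_ifs at hv <;> simp_all

lemma support_mul_subset {σ τ : Perm α} {s : Finset α} (hσ : σ.support ⊆ s)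
    (hτ : τ.support ⊆ s) : (σ * τ).support ⊆ s :=
  (support_mul_le σ τ).trans (sup_le hσ hτ)

lemma support_sq_mul_subset {g σ : Perm α} (hσ : σ.support ⊆ (g ^ 2).support) :
    ((σ * g) ^ 2).support ⊆ (g ^ 2).support := by
  intro v hv
  by_contra hv'
  rw [mem_support_sq, not_not] at hv'
  have hσv : σ v = v := notMem_support.mp fun h => mem_support_sq.mp (hσ h) hv'
  have hσgv : σ (g v) = g v := notMem_support.mp fun h =>
    mem_support_sq.mp (hσ h) (by rw [hv'])
  exact mem_support_sq.mp hv (by simp only [mul_apply, hσgv, hv', hσv])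

lemma card_support_sq_mul_lt {g σ : Perm α} (hσ : σ.support ⊆ (g ^ 2).support) {w : α}
    (hw : w ∈ (g ^ 2).support) (hfix : (σ * g) ((σ * g) w) = w) :
    #((σ * g) ^ 2).support < #(g ^ 2).support :=
  card_lt_card ⟨support_sq_mul_subset hσ, fun h => mem_support_sq.mp (h hw) hfix⟩

end Equiv.Perm

namespace Representation

variable {k α W : Type*} [CommRing k] [AddCommGroup W] [Module k W]
  (ρ : Representation k (Perm α) W)

def symmOp (g : Perm α) : Module.End k W := ρ g + ρ g⁻¹

variable {ρ}

lemma symmOp_inv (g : Perm α) : ρ.symmOp g⁻¹ = ρ.symmOp g := by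
  rw [symmOp, symmOp, inv_inv, add_comm]

lemma linHom_symmOp (h g : Perm α) :
    linHom ρ ρ h (ρ.symmOp g) = ρ.symmOp (h * g * h⁻¹) := by
  ext1 f
  simp [symmOp, mul_assoc]

variable (ρ) [DecidableEq α]

/-- The antisymmetrizer of any three points acts as zero (even permutations on the left, odd
ones on the right). On `V^⊗n` this is where `dim V ≤ 2` enters. -/
def IsThreeAlternating : Prop :=
  ∀ a b c : α, a ≠ b → a ≠ c → b ≠ c →
    ρ 1 + ρ (swap a b * swap b c) + ρ (swap b c * swap a b) =
      ρ (swap a b) + ρ (swap a c) + ρ (swap b c)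

variable {ρ}

lemma IsThreeAlternating.symmOp_relation (hρ : ρ.IsThreeAlternating) {a b c : α}
    (hab : a ≠ b) (hac : a ≠ c) (hbc : b ≠ c) (g : Perm α) :
    ρ.symmOp g + ρ.symmOp (swap a b * swap b c * g) + ρ.symmOp (swap b c * swap a b * g) =
      ρ.symmOp (swap a b * g) + ρ.symmOp (swap a c * g) + ρ.symmOp (swap b c * g) := by
  have h := hρ a b c hab hac hbc
  have hr := congrArg (· * ρ g) h
  have hl := congrArg (ρ g⁻¹ * ·) h
  simp only [add_mul, mul_add, map_one, one_mul, mul_one, map_mul, mul_assoc] at hr hl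
  simp only [symmOp, mul_inv_rev, swap_inv, map_mul, mul_assoc]
  calc _ = (ρ g + ρ (swap a b) * (ρ (swap b c) * ρ g) + ρ (swap b c) * (ρ (swap a b) * ρ g)) +
        (ρ g⁻¹ + ρ g⁻¹ * (ρ (swap a b) * ρ (swap b c)) +
          ρ g⁻¹ * (ρ (swap b c) * ρ (swap a b))) := by abel
    _ = _ := by rw [hr, hl]; abel

variable (ρ) [Fintype α]

def symmSpanLT (B : ℕ) : Submodule k (Module.End k W) :=
  Submodule.span k (ρ.symmOp '' {p | #(p ^ 2).support < B})

variable {ρ}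

lemma symmOp_mem_symmSpanLT {p : Perm α} {B : ℕ} (hp : #(p ^ 2).support < B) :
    ρ.symmOp p ∈ ρ.symmSpanLT B :=
  Submodule.subset_span ⟨p, hp, rfl⟩

lemma symmSpanLT_mono {B B' : ℕ} (h : B ≤ B') : ρ.symmSpanLT B ≤ ρ.symmSpanLT B' :=
  Submodule.span_mono (Set.image_mono fun _ hp => lt_of_lt_of_le hp h)

lemma linHom_mem_symmSpanLT (h : Perm α) {B : ℕ} {X : Module.End k W}
    (hX : X ∈ ρ.symmSpanLT B) : linHom ρ ρ h X ∈ ρ.symmSpanLT B := by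
  have : (ρ.symmSpanLT B).map (linHom ρ ρ h) ≤ ρ.symmSpanLT B := by
    rw [symmSpanLT, Submodule.map_span_le]
    rintro _ ⟨p, hp, rfl⟩
    rw [linHom_symmOp]
    refine symmOp_mem_symmSpanLT (lt_of_eq_of_lt ?_ hp)
    rw [conj_pow, Perm.card_support_conj]
  exact this (Submodule.mem_map_of_mem hX)

lemma symmOp_mul_mem_symmSpanLT {g σ : Perm α} (hσ : σ.support ⊆ (g ^ 2).support) {w : α}
    (hw : w ∈ (g ^ 2).support) (hfix : (σ * g) ((σ * g) w) = w) :
    ρ.symmOp (σ * g) ∈ ρ.symmSpanLT #(g ^ 2).support :=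
  symmOp_mem_symmSpanLT (Perm.card_support_sq_mul_lt hσ hw hfix)

lemma symmOp_mul_mem_symmSpanLT_of_mem {g σ : Perm α} (hσ : σ.support ⊆ (g ^ 2).support)
    (h : ρ.symmOp (σ * g) ∈ ρ.symmSpanLT #((σ * g) ^ 2).support) :
    ρ.symmOp (σ * g) ∈ ρ.symmSpanLT #(g ^ 2).support :=
  symmSpanLT_mono (card_le_card (Perm.support_sq_mul_subset hσ)) h

lemma IsThreeAlternating.symmOp_add_linHom_swap_mem (hρ : ρ.IsThreeAlternating) {g : Perm α}
    {a : α} (ha : g (g a) ≠ a) :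
    ρ.symmOp g + linHom ρ ρ (swap a (g a)) (ρ.symmOp g) ∈ ρ.symmSpanLT #(g ^ 2).support := by
  have haS : a ∈ (g ^ 2).support := Perm.mem_support_sq.mpr ha
  have h1S : g a ∈ (g ^ 2).support := Perm.mem_support_sq.mpr fun h => ha (g.injective h)
  have h2S : g (g a) ∈ (g ^ 2).support :=
    Perm.mem_support_sq.mpr fun h => ha (g.injective (g.injective h))
  have hconj : swap a (g a) * swap (g a) (g (g a)) * g = swap a (g a) * g * (swap a (g a))⁻¹ := by
    rw [swap_inv, mul_assoc _ g, mul_swap_eq_swap_mul g a (g a), ← mul_assoc]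
  generalize hx₁ : g a = x₁ at ha h1S h2S hconj ⊢
  generalize hx₂ : g x₁ = x₂ at ha h2S hconj
  have h01 : a ≠ x₁ := by rintro rfl; exact ha (by rw [← hx₂, hx₁])
  have h12 : x₁ ≠ x₂ := fun h => h01 (g.injective (by rw [hx₁, hx₂, h]))
  have E := hρ.symmOp_relation h01 ha.symm h12 g
  rw [hconj, ← linHom_symmOp, ← eq_sub_iff_add_eq] at E
  rw [E]
  refine sub_mem (add_mem (add_mem ?_ ?_) ?_) ?_
  · refine symmOp_mul_mem_symmSpanLT (Perm.support_swap_subset haS h1S) haS ?_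
    simp only [Perm.mul_apply, hx₁, swap_apply_right]
  · refine symmOp_mul_mem_symmSpanLT (Perm.support_swap_subset haS h2S) haS ?_
    simp only [Perm.mul_apply, hx₁, hx₂, swap_apply_of_ne_of_ne h01.symm h12, swap_apply_right]
  · refine symmOp_mul_mem_symmSpanLT (Perm.support_swap_subset h1S h2S) h1S ?_
    simp only [Perm.mul_apply, hx₂, swap_apply_right]
  · refine symmOp_mul_mem_symmSpanLT (Perm.support_mul_subset (Perm.support_swap_subset h1S h2S)
      (Perm.support_swap_subset haS h1S)) h1S ?_
    simp only [Perm.mul_apply, hx₂, swap_apply_of_ne_of_ne ha h12.symm, swap_apply_right]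

lemma IsThreeAlternating.linHom_prod_swap_sub_mem (hρ : ρ.IsThreeAlternating) {g : Perm α}
    (l : List α) (hl : ∀ y ∈ l, g (g y) ≠ y) :
    linHom ρ ρ (l.map fun y => swap y (g y)).prod (ρ.symmOp g) -
      (-1 : k) ^ l.length • ρ.symmOp g ∈ ρ.symmSpanLT #(g ^ 2).support := by
  simpa using (linHom ρ ρ).sub_neg_one_pow_smul_mem_of_forall_add_mem
    (fun h _ hX => linHom_mem_symmSpanLT h hX) (l.map fun y => swap y (g y))
    (by simpa using fun y hy => hρ.symmOp_add_linHom_swap_mem (hl y hy))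

variable [Invertible (2 : k)]

lemma IsThreeAlternating.symmOp_mem_of_four_cycle (hρ : ρ.IsThreeAlternating) {g : Perm α}
    {a : α} (h2 : g (g a) ≠ a) (h4 : g (g (g (g a))) = a) :
    ρ.symmOp g ∈ ρ.symmSpanLT #(g ^ 2).support := by
  have hchain := hρ.linHom_prod_swap_sub_mem [a, g a, g (g a)] (by
    simp only [List.mem_cons, List.not_mem_nil, or_false, forall_eq_or_imp, forall_eq]
    exact ⟨h2, fun h => h2 (g.injective h), fun h => h2 (h4.symm.trans h).symm⟩)
  generalize hx₁ : g a = x₁ at h2 h4 hchain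
  generalize hx₂ : g x₁ = x₂ at h2 h4 hchain
  generalize hx₃ : g x₂ = x₃ at h4
  have h01 : a ≠ x₁ := by rintro rfl; exact h2 (by rw [← hx₂, hx₁])
  have h02 : a ≠ x₂ := fun h => h2 h.symm
  have h03 : a ≠ x₃ := fun h => h01 (by rw [← h4, ← h, hx₁])
  have h12 : x₁ ≠ x₂ := fun h => h01 (g.injective (by rw [hx₁, hx₂, h]))
  have h13 : x₁ ≠ x₃ := fun h => h02 (g.injective (by rw [hx₁, hx₃, h]))
  have h23 : x₂ ≠ x₃ := fun h => h12 (g.injective (by rw [hx₂, hx₃, h]))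
  have hcomm : g * (swap a x₁ * (swap x₁ x₂ * swap x₂ x₃)) * g⁻¹ =
      swap a x₁ * (swap x₁ x₂ * swap x₂ x₃) := by
    calc _ = (g * swap a x₁ * g⁻¹) * ((g * swap x₁ x₂ * g⁻¹) * (g * swap x₂ x₃ * g⁻¹)) := by
          group
      _ = swap x₁ x₂ * (swap x₂ x₃ * swap x₃ a) := by
          simp only [← swap_apply_apply, hx₁, hx₂, hx₃, h4]
      _ = _ := by
          have hnodup : [a, x₁, x₂, x₃].Nodup := by simp [*]
          simpa [List.formPerm_cons_cons] using List.formPerm_rotate _ hnodup 1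
  rw [show (-1 : k) ^ [a, x₁, x₂].length = -1 by norm_num, neg_one_smul, sub_neg_eq_add] at hchain
  simp only [List.map_cons, List.map_nil, List.prod_cons, List.prod_nil, mul_one, hx₁, hx₂,
    hx₃, linHom_symmOp, mul_inv_eq_of_eq_mul (eq_mul_of_mul_inv_eq hcomm).symm] at hchain
  exact Submodule.mem_of_add_self_mem (add_comm (ρ.symmOp g) _ ▸ hchain)

lemma IsThreeAlternating.symmOp_add_linHom_swap_mul_swap_mem (hρ : ρ.IsThreeAlternating)
    {g : Perm α} {x₀ x₁ x₂ x₃ x₄ : α} (h₁ : g x₀ = x₁) (h₂ : g x₁ = x₂) (h₃ : g x₂ = x₃)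
    (h₄ : g x₃ = x₄) (hnd : [x₀, x₁, x₂, x₃, x₄].Nodup) :
    ρ.symmOp g + linHom ρ ρ (swap x₀ x₂ * swap x₁ x₃) (ρ.symmOp g) ∈
      ρ.symmSpanLT #(g ^ 2).support := by
  simp only [List.nodup_cons, List.mem_cons, List.not_mem_nil, or_false, not_or,
    List.nodup_nil, and_true, not_false_eq_true, ← ne_eq] at hnd
  obtain ⟨⟨h01, h02, h03, h04⟩, ⟨h12, h13, h14⟩, ⟨h23, h24⟩, h34⟩ := hnd
  have h0S : x₀ ∈ (g ^ 2).support := Perm.mem_support_sq.mpr (by rw [h₁, h₂]; exact h02.symm)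
  have h2S : x₂ ∈ (g ^ 2).support := Perm.mem_support_sq.mpr (by rw [h₃, h₄]; exact h24.symm)
  have h4S : x₄ ∈ (g ^ 2).support := Perm.mem_support_sq.mpr fun h =>
    h24 (g.injective (g.injective (by rw [h, h₃, h₄])))
  have E := hρ.symmOp_relation h02 h04 h24 g
  rw [← Perm.swap_mul_swap_conj_eq h₁ h₂ h₃ h₄ h12 h23 h14 h34, ← linHom_symmOp,
    ← eq_sub_iff_add_eq] at E
  rw [E]
  refine sub_mem (add_mem (add_mem ?_ ?_) ?_) ?_
  · refine symmOp_mul_mem_symmSpanLT (Perm.support_swap_subset h0S h2S) h0S ?_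
    simp only [Perm.mul_apply, h₁, h₂, swap_apply_of_ne_of_ne h01.symm h12, swap_apply_right]
  · refine symmOp_mul_mem_symmSpanLT_of_mem (Perm.support_swap_subset h0S h4S)
      (hρ.symmOp_mem_of_four_cycle (a := x₀) ?_ ?_)
    · simp only [Perm.mul_apply, h₁, h₂, swap_apply_of_ne_of_ne h01.symm h14,
        swap_apply_of_ne_of_ne h02.symm h24]
      exact h02.symm
    · simp only [Perm.mul_apply, h₁, h₂, h₃, h₄, swap_apply_of_ne_of_ne h01.symm h14,
        swap_apply_of_ne_of_ne h02.symm h24, swap_apply_of_ne_of_ne h03.symm h34,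
        swap_apply_right]
  · refine symmOp_mul_mem_symmSpanLT (Perm.support_swap_subset h2S h4S) h2S ?_
    simp only [Perm.mul_apply, h₃, h₄, swap_apply_of_ne_of_ne h23.symm h34, swap_apply_right]
  · refine symmOp_mul_mem_symmSpanLT (Perm.support_mul_subset
      (Perm.support_swap_subset h2S h4S) (Perm.support_swap_subset h0S h2S)) h0S ?_
    simp only [Perm.mul_apply, h₁, h₂, swap_apply_of_ne_of_ne h01.symm h12,
      swap_apply_of_ne_of_ne h12 h14, swap_apply_right, swap_apply_of_ne_of_ne h02 h04]

lemma IsThreeAlternating.symmOp_mem_of_orbit_ge_five (hρ : ρ.IsThreeAlternating) {g : Perm α}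
    {a : α} (h2 : g (g a) ≠ a) (h3 : g (g (g a)) ≠ a) (h4 : g (g (g (g a))) ≠ a) :
    ρ.symmOp g ∈ ρ.symmSpanLT #(g ^ 2).support := by
  generalize hx₁ : g a = x₁ at h2 h3 h4
  generalize hx₂ : g x₁ = x₂ at h2 h3 h4
  generalize hx₃ : g x₂ = x₃ at h3 h4
  generalize hx₄ : g x₃ = x₄ at h4
  have h01 : a ≠ x₁ := by rintro rfl; exact h2 (by rw [← hx₂, hx₁])
  have h02 : a ≠ x₂ := fun h => h2 h.symm
  have h03 : a ≠ x₃ := fun h => h3 h.symm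
  have h12 : x₁ ≠ x₂ := fun h => h01 (g.injective (by rw [hx₁, hx₂, h]))
  have h13 : x₁ ≠ x₃ := fun h => h02 (g.injective (by rw [hx₁, hx₃, h]))
  have h14 : x₁ ≠ x₄ := fun h => h03 (g.injective (by rw [hx₁, hx₄, h]))
  have h23 : x₂ ≠ x₃ := fun h => h12 (g.injective (by rw [hx₂, hx₃, h]))
  have h24 : x₂ ≠ x₄ := fun h => h13 (g.injective (by rw [hx₂, hx₄, h]))
  have h34 : x₃ ≠ x₄ := fun h => h23 (g.injective (by rw [hx₃, hx₄, h]))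
  have hsum := hρ.symmOp_add_linHom_swap_mul_swap_mem hx₁ hx₂ hx₃ hx₄ (by
    simp [*, Ne.symm h4])
  -- `(a x₂)(x₁ x₃)` exchanges the blocks `a x₁` and `x₂ x₃` of the cycle.
  have hchain := hρ.linHom_prod_swap_sub_mem (g := g) [x₁, a, x₂, x₁] (by
    simp only [List.mem_cons, List.not_mem_nil, or_false, forall_eq_or_imp, forall_eq, hx₁, hx₂,
      hx₃, hx₄]
    exact ⟨h13.symm, h2, h24.symm, h13.symm⟩)
  simp only [List.map_cons, List.map_nil, List.prod_cons, List.prod_nil, mul_one, hx₁, hx₂,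
    hx₃, Perm.swap_mul_swap_mul_swap_mul_swap h01 h02 h03 h12 h13 h23] at hchain
  rw [show (-1 : k) ^ [x₁, a, x₂, x₁].length = 1 by norm_num, one_smul] at hchain
  apply Submodule.mem_of_add_self_mem
  convert sub_mem hsum hchain using 1
  abel

lemma IsThreeAlternating.symmOp_mem_of_orbit_ge_four (hρ : ρ.IsThreeAlternating) {g : Perm α}
    {a : α} (h2 : g (g a) ≠ a) (h3 : g (g (g a)) ≠ a) :
    ρ.symmOp g ∈ ρ.symmSpanLT #(g ^ 2).support := by
  by_cases h4 : g (g (g (g a))) = a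
  · exact hρ.symmOp_mem_of_four_cycle h2 h4
  · exact hρ.symmOp_mem_of_orbit_ge_five h2 h3 h4

lemma IsThreeAlternating.symmOp_mem_of_single_three_cycle (hρ : ρ.IsThreeAlternating)
    {g : Perm α} {a : α} (h2 : g (g a) ≠ a) (h3 : g (g (g a)) = a)
    (hrest : ∀ v, v ≠ a → v ≠ g a → v ≠ g (g a) → g (g v) = v) :
    ρ.symmOp g ∈ ρ.symmSpanLT #(g ^ 2).support := by
  have hflip := hρ.symmOp_add_linHom_swap_mem h2
  generalize hx₁ : g a = x₁ at h2 h3 hrest hflip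
  generalize hx₂ : g x₁ = x₂ at h2 h3 hrest
  have h01 : a ≠ x₁ := by rintro rfl; exact h2 (by rw [← hx₂, hx₁])
  have h12 : x₁ ≠ x₂ := fun h => h01 (g.injective (by rw [hx₁, hx₂, h]))
  have hinv : swap a x₁ * g * (swap a x₁)⁻¹ = g⁻¹ := by
    rw [swap_inv, ← mul_eq_one_iff_eq_inv, mul_assoc]
    ext v
    simp only [Perm.mul_apply, Perm.one_apply]
    by_cases hv₀ : v = a
    · subst hv₀; simp [hx₁]
    by_cases hv₁ : v = x₁
    · subst hv₁; simp [hx₂, h3, swap_apply_of_ne_of_ne h2 h12.symm]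
    by_cases hv₂ : v = x₂
    · subst hv₂; simp [hx₂, h3, swap_apply_of_ne_of_ne h2 h12.symm]
    have hgv : g v ≠ a ∧ g v ≠ x₁ := ⟨fun h => hv₂ (g.injective (h.trans h3.symm)),
      fun h => hv₀ (g.injective (h.trans hx₁.symm))⟩
    rw [swap_apply_of_ne_of_ne hgv.1 hgv.2, hrest v hv₀ hv₁ hv₂, swap_apply_of_ne_of_ne hv₀ hv₁]
  rw [linHom_symmOp, hinv, symmOp_inv] at hflip
  exact Submodule.mem_of_add_self_mem hflip

lemma IsThreeAlternating.symmOp_mem_of_two_three_cycles (hρ : ρ.IsThreeAlternating)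
    {g : Perm α} {a b : α} (ha2 : g (g a) ≠ a) (ha3 : g (g (g a)) = a) (hb2 : g (g b) ≠ b)
    (hb3 : g (g (g b)) = b) (hb₀ : b ≠ a) (hb₁ : b ≠ g a) (hb₂ : b ≠ g (g a)) :
    ρ.symmOp g ∈ ρ.symmSpanLT #(g ^ 2).support := by
  have haS : a ∈ (g ^ 2).support := Perm.mem_support_sq.mpr ha2
  have hbS : b ∈ (g ^ 2).support := Perm.mem_support_sq.mpr hb2
  have h1S : g a ∈ (g ^ 2).support := Perm.mem_support_sq.mpr fun h => ha2 (g.injective h)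
  generalize hx₁ : g a = x₁ at ha2 ha3 hb₁ hb₂ h1S
  generalize hx₂ : g x₁ = x₂ at ha2 ha3 hb₂
  generalize hy₁ : g b = y₁ at hb2 hb3
  generalize hy₂ : g y₁ = y₂ at hb2 hb3
  have h01 : a ≠ x₁ := by rintro rfl; exact ha2 (by rw [← hx₂, hx₁])
  have h12 : x₁ ≠ x₂ := fun h => h01 (g.injective (by rw [hx₁, hx₂, h]))
  have hy₁a : y₁ ≠ a := fun h => hb₂ (g.injective (by rw [hy₁, h, ha3]))
  have hy₁x₁ : y₁ ≠ x₁ := fun h => hb₀ (g.injective (by rw [hy₁, h, hx₁]))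
  have hy₁b : y₁ ≠ b := by rintro rfl; exact hb2 (by rw [← hy₂, hy₁])
  have hy₂a : y₂ ≠ a := fun h => hb₁ (by rw [← hb3, h, hx₁])
  have hy₂x₁ : y₂ ≠ x₁ := fun h => hb₂ (by rw [← hb3, h, hx₂])
  have E := hρ.symmOp_relation h01 hb₀.symm (fun h => hb₁ h.symm) g
  rw [← eq_sub_iff_add_eq, ← eq_sub_iff_add_eq] at E
  rw [E]
  refine sub_mem (sub_mem (add_mem (add_mem ?_ ?_) ?_) ?_) ?_
  · refine symmOp_mul_mem_symmSpanLT (Perm.support_swap_subset haS h1S) haS ?_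
    simp only [Perm.mul_apply, hx₁, swap_apply_right]
  · refine symmOp_mul_mem_symmSpanLT_of_mem (Perm.support_swap_subset haS hbS)
      (hρ.symmOp_mem_of_orbit_ge_four (a := a) ?_ ?_) <;>
    simp only [Perm.mul_apply, hx₁, hx₂, ha3, swap_apply_of_ne_of_ne h01.symm hb₁.symm,
      swap_apply_of_ne_of_ne ha2 hb₂.symm, swap_apply_left]
    exacts [ha2, hb₀]
  · refine symmOp_mul_mem_symmSpanLT_of_mem (Perm.support_swap_subset h1S hbS)
      (hρ.symmOp_mem_of_orbit_ge_four (a := a) ?_ ?_) <;>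
    simp only [Perm.mul_apply, hx₁, hy₁, hy₂, swap_apply_left,
      swap_apply_of_ne_of_ne hy₁x₁ hy₁b, swap_apply_of_ne_of_ne hy₂x₁ hb2]
    exacts [hy₁a, hy₂a]
  · refine symmOp_mul_mem_symmSpanLT (Perm.support_mul_subset (Perm.support_swap_subset h1S hbS)
      (Perm.support_swap_subset haS h1S)) haS ?_
    simp only [Perm.mul_apply, hx₁, swap_apply_right, swap_apply_of_ne_of_ne h01 hb₀.symm]
  · refine symmOp_mul_mem_symmSpanLT (Perm.support_mul_subset (Perm.support_swap_subset haS h1S)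
      (Perm.support_swap_subset h1S hbS)) h1S ?_
    simp only [Perm.mul_apply, hx₂, ha3, swap_apply_of_ne_of_ne h12.symm hb₂.symm,
      swap_apply_of_ne_of_ne ha2 h12.symm, swap_apply_of_ne_of_ne h01 hb₀.symm, swap_apply_left]

lemma IsThreeAlternating.symmOp_mem_symmSpanLT_of_nonempty (hρ : ρ.IsThreeAlternating)
    {g : Perm α} (hg : (g ^ 2).support.Nonempty) :
    ρ.symmOp g ∈ ρ.symmSpanLT #(g ^ 2).support := by
  obtain ⟨a, ha⟩ := hg
  rw [Perm.mem_support_sq] at ha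
  by_cases ha3 : g (g (g a)) ≠ a
  · exact hρ.symmOp_mem_of_orbit_ge_four ha ha3
  rw [not_not] at ha3
  by_cases hb : ∃ b, b ≠ a ∧ b ≠ g a ∧ b ≠ g (g a) ∧ g (g b) ≠ b
  · obtain ⟨b, hb₀, hb₁, hb₂, hb⟩ := hb
    by_cases hb3 : g (g (g b)) ≠ b
    · exact hρ.symmOp_mem_of_orbit_ge_four hb hb3
    · exact hρ.symmOp_mem_of_two_three_cycles ha ha3 hb (not_not.mp hb3) hb₀ hb₁ hb₂
  · push Not at hb
    exact hρ.symmOp_mem_of_single_three_cycle ha ha3 hb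

theorem IsThreeAlternating.symmOp_mem_symmSpanLT_one (hρ : ρ.IsThreeAlternating) (g : Perm α) :
    ρ.symmOp g ∈ ρ.symmSpanLT 1 := by
  induction h : #(g ^ 2).support using Nat.strong_induction_on generalizing g with
  | _ B ih =>
    rcases B.eq_zero_or_pos with rfl | hB
    · exact symmOp_mem_symmSpanLT (by omega)
    have hg := hρ.symmOp_mem_symmSpanLT_of_nonempty (card_pos.mp (h ▸ hB))
    rw [h] at hg
    refine Submodule.span_le.mpr ?_ hg
    rintro _ ⟨p, hp, rfl⟩
    exact ih _ hp p rfl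

theorem IsThreeAlternating.span_add_inv_eq_span_involutions (hρ : ρ.IsThreeAlternating) :
    Submodule.span k {f | ∃ g, f = ρ g + ρ g⁻¹} =
      Submodule.span k {f | ∃ g : Perm α, g * g = 1 ∧ f = ρ g} := by
  apply le_antisymm
  · rw [Submodule.span_le]
    rintro _ ⟨g, rfl⟩
    refine Submodule.span_le.mpr ?_ (hρ.symmOp_mem_symmSpanLT_one g)
    rintro _ ⟨p, hp, rfl⟩
    have hp : p * p = 1 := by
      rw [← sq, ← Perm.support_eq_empty_iff, ← card_eq_zero]
      exact Nat.lt_one_iff.mp hp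
    rw [symmOp, inv_eq_of_mul_eq_one_right hp]
    exact add_mem (Submodule.subset_span ⟨p, hp, rfl⟩) (Submodule.subset_span ⟨p, hp, rfl⟩)
  · rw [Submodule.span_le]
    rintro _ ⟨t, ht, rfl⟩
    apply Submodule.mem_of_add_self_mem
    nth_rewrite 2 [← inv_eq_of_mul_eq_one_right ht]
    exact Submodule.subset_span ⟨t, rfl⟩

end Representation

def permRep (d n : ℕ) : Representation ℂ (Perm (Fin n)) ((Fin n → Fin d) → ℂ) where
  toFun := permOp d n
  map_one' := rfl
  map_mul' _ _ := rfl

lemma Function.comp_swap_of_eq {α β : Type*} [DecidableEq α] {x : α → β} {a b : α}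
    (h : x a = x b) : x ∘ ⇑(Equiv.swap a b) = x := by
  funext i
  rw [Function.comp_apply, swap_apply_def]
  split_ifs with h1 h2 <;> simp [*]

lemma permRep_isThreeAlternating {d n : ℕ} (hd : d ≤ 2) :
    (permRep d n).IsThreeAlternating := by
  intro a b c hab hac hbc
  refine LinearMap.ext fun f => funext fun x => ?_
  change f (x ∘ ⇑(1 : Perm (Fin n))) + f (x ∘ ⇑(swap a b * swap b c)) +
      f (x ∘ ⇑(swap b c * swap a b)) =
    f (x ∘ ⇑(swap a b)) + f (x ∘ ⇑(swap a c)) + f (x ∘ ⇑(swap b c))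
  have hcomp : ∀ {u v : Fin n} (σ : Perm (Fin n)), x u = x v → x ∘ ⇑(swap u v * σ) = x ∘ ⇑σ :=
    fun σ h => by rw [Perm.coe_mul, ← Function.comp_assoc, Function.comp_swap_of_eq h]
  -- `x` takes at most two values, so it is invariant under one of the three transpositions,
  -- which pairs the even terms with the odd ones.
  have hx : x a = x b ∨ x b = x c ∨ x a = x c := by
    have := (x a).isLt; have := (x b).isLt; have := (x c).isLt
    simp only [Fin.ext_iff]
    omega
  rcases hx with h | h | h
  · have e : swap b c * swap a b = swap a b * swap a c := by
      rw [swap_mul_eq_mul_swap, swap_inv, swap_apply_right,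
        swap_apply_of_ne_of_ne hac.symm hbc.symm]
    rw [e, hcomp _ h, hcomp _ h, ← hcomp 1 h, mul_one]
    abel
  · have e : swap a b * swap b c = swap b c * swap a c := by
      rw [swap_mul_eq_mul_swap, swap_inv, swap_apply_of_ne_of_ne hab hac, swap_apply_left]
    rw [e, hcomp _ h, hcomp _ h, ← hcomp 1 h, mul_one]
    abel
  · have e₁ : swap a b * swap b c = swap a c * swap a b := by
      rw [swap_mul_eq_mul_swap (swap a b) a c, swap_inv, swap_apply_left,
        swap_apply_of_ne_of_ne hac.symm hbc.symm]
    have e₂ : swap b c * swap a b = swap a c * swap b c := by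
      rw [swap_mul_eq_mul_swap (swap b c) a c, swap_inv, swap_apply_of_ne_of_ne hab hac,
        swap_apply_right]
    rw [e₁, e₂, hcomp _ h, hcomp _ h, ← hcomp 1 h, mul_one]
    abel

/-- The symmetric part `Σₙ⁺` of the swap algebra (`dim V = 2`), i.e. the span of the
operators `g + g⁻¹` for `g ∈ Sₙ`, is spanned over `ℂ` by the operators induced by
involutions of `Sₙ`. -/
theorem symmetric_part_spanned_by_involutions (n : ℕ) :
    Submodule.span ℂ
        {f : Module.End ℂ ((Fin n → Fin 2) → ℂ) |
          ∃ g : Equiv.Perm (Fin n), f = permOp 2 n g + permOp 2 n g⁻¹} =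
      Submodule.span ℂ
        {f : Module.End ℂ ((Fin n → Fin 2) → ℂ) |
          ∃ g : Equiv.Perm (Fin n), g * g = 1 ∧ f = permOp 2 n g} :=
  (permRep_isThreeAlternating le_rfl).span_add_inv_eq_span_involutions
end
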